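/- Let (E, ℰ) be a measurable space and X_1, …, X_N (N ≥ 1) independent E-valued random variables with X_k distributed according to a probability measure μ_k. Let h_1, …, h_N : E → ℝ be measurable functions with ∫_E h_k dμ_k = 0 for every k and σ(h) < ∞. Then for every ε ≥ 0, E[ exp(ε √N |m(X)(h)|) ] ≤ (1 + √(2π) ε σ(h)) · e^{ε² σ²(h)/8}. -/

import Mathlib

open MeasureTheory ProbabilityTheory Real
open scoped NNReal

/-!
Each summand `hₖ(Xₖ)` is centred with values in an interval of length `osc hₖ`. For the sum `T`
and `R = ∑ₖ osc(hₖ)²`, Hoeffding's lemma bounds `E exp(±tT)` by `exp(t²R/8)`, and Popoviciu's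
inequality bounds `Var T` by `R/4`, hence `E|T| ≤ √R/2`. Writing
`exp(t|T|) = exp(tT) + exp(-tT) - exp(-t|T|)` and using `exp(-t|T|) ≥ 1 - t|T|` gives
`E exp(t|T|) ≤ 2 exp(t²R/8) - 1 + t√R/2 ≤ (1 + t√R) exp(t²R/8)`. Since `√(2π) ≥ 1`, this is the
claim for `t = ε/√N`.
-/

/-- The oscillation of a real-valued function: `sup {|h x - h y| : x y}`. -/
noncomputable def osc {E : Type*} (h : E → ℝ) : ℝ :=
  ⨆ q : E × E, |h q.1 - h q.2|

lemma mem_Icc_iInf_add_osc {E : Type*} {h : E → ℝ}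
    (hB : BddAbove (Set.range fun q : E × E => |h q.1 - h q.2|)) (x : E) :
    h x ∈ Set.Icc (⨅ y, h y) ((⨅ y, h y) + osc h) := by
  have : Nonempty E := ⟨x⟩
  have hdiff : ∀ y z, h y - h z ≤ osc h := fun y z =>
    (le_abs_self _).trans (le_ciSup hB (y, z))
  have hbdd : BddBelow (Set.range h) :=
    ⟨h x - osc h, by rintro _ ⟨y, rfl⟩; linarith [hdiff x y]⟩
  have hinf : h x - osc h ≤ ⨅ y, h y := le_ciInf fun y => by linarith [hdiff x y]
  exact ⟨ciInf_le hbdd x, by linarith⟩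

lemma one_sub_mul_exp_sq_div_eight_le {u : ℝ} (hu : 0 ≤ u) :
    (1 - u) * exp (u ^ 2 / 8) ≤ 1 - u / 2 := by
  rcases le_total u 1 with hu1 | hu1
  · have hexp : exp (u ^ 2 / 8) ≤ 1 + u ^ 2 / 4 := by
      have hsmall : |u ^ 2 / 8| ≤ 1 := by rw [abs_of_nonneg (by positivity)]; nlinarith
      have := (abs_le.1 (abs_exp_sub_one_le hsmall)).2
      rw [abs_of_nonneg (by positivity)] at this
      linarith
    calc (1 - u) * exp (u ^ 2 / 8) ≤ (1 - u) * (1 + u ^ 2 / 4) :=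
          mul_le_mul_of_nonneg_left hexp (by linarith)
      _ ≤ 1 - u / 2 := by nlinarith
  · nlinarith [one_le_exp (by positivity : 0 ≤ u ^ 2 / 8)]

namespace ProbabilityTheory

variable {Ω : Type*} [MeasurableSpace Ω] {μ : Measure Ω} [IsProbabilityMeasure μ] {T : Ω → ℝ}

lemma integral_abs_le_sqrt_variance (hT : MemLp T 2 μ) (hT0 : μ[T] = 0) :
    ∫ ω, |T ω| ∂μ ≤ √(variance T μ) := by
  apply Real.le_sqrt_of_sq_le
  have hvar := variance_nonneg |T| μ
  rw [variance_eq_sub hT.abs] at hvar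
  rw [variance_of_integral_eq_zero hT.aemeasurable hT0]
  simp only [Pi.pow_apply, Pi.abs_apply, sq_abs] at hvar
  linarith

lemma HasSubgaussianMGF.integral_exp_mul_abs_le {c : ℝ≥0} (hT : HasSubgaussianMGF T c μ)
    (t : ℝ) :
    ∫ ω, exp (t * |T ω|) ∂μ ≤ 2 * exp (c * t ^ 2 / 2) - 1 + t * ∫ ω, |T ω| ∂μ := by
  have hpos := hT.integrable_exp_mul t
  have hneg := hT.integrable_exp_mul (-t)
  have hnegabs := integrable_exp_mul_abs (t := -t) hneg (by simpa using hpos)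
  have hsplit : ∀ ω, exp (t * |T ω|) = exp (t * T ω) + exp (-t * T ω) - exp (-t * |T ω|) := by
    intro ω
    rcases abs_choice (T ω) with h | h <;> rw [h] <;> ring_nf
  have hlow : 1 - t * ∫ ω, |T ω| ∂μ ≤ ∫ ω, exp (-t * |T ω|) ∂μ := by
    calc 1 - t * ∫ ω, |T ω| ∂μ = ∫ ω, (1 - t * |T ω|) ∂μ := by
          rw [integral_sub (integrable_const 1) (hT.integrable.abs.const_mul t),
            integral_const_mul]
          simp
      _ ≤ ∫ ω, exp (-t * |T ω|) ∂μ :=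
          integral_mono ((integrable_const 1).sub (hT.integrable.abs.const_mul t)) hnegabs
            fun ω => by linarith [add_one_le_exp (-t * |T ω|)]
  have hmgf_pos := hT.mgf_le t
  have hmgf_neg := hT.mgf_le (-t)
  rw [neg_sq] at hmgf_neg
  simp only [mgf] at hmgf_pos hmgf_neg
  simp_rw [hsplit]
  rw [integral_sub (f := fun ω => exp (t * T ω) + exp (-t * T ω)) (hpos.add hneg) hnegabs,
    integral_add hpos hneg]
  linarith

theorem integral_exp_mul_abs_sum_le {ι : Type*} [Fintype ι] {Y : ι → Ω → ℝ}
    (hmeas : ∀ i, AEMeasurable (Y i) μ) (hindep : iIndepFun Y μ) {a r : ι → ℝ}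
    (hY : ∀ i, ∀ᵐ ω ∂μ, Y i ω ∈ Set.Icc (a i) (a i + r i)) (hmean : ∀ i, μ[Y i] = 0)
    {t : ℝ} (ht : 0 ≤ t) :
    ∫ ω, exp (t * |∑ i, Y i ω|) ∂μ ≤
      (1 + t * √(∑ i, r i ^ 2)) * exp (t ^ 2 * (∑ i, r i ^ 2) / 8) := by
  set R := ∑ i, r i ^ 2
  have hsub : HasSubgaussianMGF (fun ω => ∑ i, Y i ω) (∑ i, (‖r i‖₊ / 2) ^ 2) μ :=
    HasSubgaussianMGF.sum_of_iIndepFun hindep fun i _ => by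
      simpa using hasSubgaussianMGF_of_mem_Icc_of_integral_eq_zero (hmeas i) (hY i) (hmean i)
  have hc : ((∑ i, (‖r i‖₊ / 2) ^ 2 : ℝ≥0) : ℝ) = R / 4 := by
    push_cast
    simp only [Real.norm_eq_abs, div_pow, sq_abs, R, Finset.sum_div]
    norm_num
  have hL2 : ∀ i, MemLp (Y i) 2 μ := fun i =>
    memLp_of_bounded (hY i) (hmeas i).aestronglyMeasurable 2
  have hvar : variance (∑ i, Y i) μ ≤ R / 4 := by
    rw [IndepFun.variance_sum (fun i _ => hL2 i) fun i _ j _ hij => hindep.indepFun hij]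
    calc ∑ i, variance (Y i) μ ≤ ∑ i, (r i / 2) ^ 2 := Finset.sum_le_sum fun i _ => by
          simpa using variance_le_sq_of_bounded (hY i) (hmeas i)
      _ = R / 4 := by simp only [div_pow, R, Finset.sum_div]; norm_num
  have habs : ∫ ω, |∑ i, Y i ω| ∂μ ≤ √R / 2 := by
    have hsum0 : μ[∑ i, Y i] = 0 := by
      simp only [Finset.sum_apply]
      rw [integral_finsetSum _ fun i _ => (hL2 i).integrable one_le_two]
      simp [hmean]
    calc ∫ ω, |∑ i, Y i ω| ∂μ ≤ √(variance (∑ i, Y i) μ) := by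
          simpa only [Finset.sum_apply] using
            integral_abs_le_sqrt_variance (memLp_finsetSum' _ fun i _ => hL2 i) hsum0
      _ ≤ √(R / 4) := Real.sqrt_le_sqrt hvar
      _ = √R / 2 := by rw [Real.sqrt_div' R (by norm_num : (0:ℝ) ≤ 4)]; norm_num
  have hu : R / 4 * t ^ 2 / 2 = (t * √R) ^ 2 / 8 := by
    rw [mul_pow, sq_sqrt (Finset.sum_nonneg fun i _ => sq_nonneg (r i))]; ring
  have hmgf := hsub.integral_exp_mul_abs_le t
  rw [hc, hu] at hmgf
  rw [show t ^ 2 * R / 8 = R / 4 * t ^ 2 / 2 by ring, hu]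
  calc ∫ ω, exp (t * |∑ i, Y i ω|) ∂μ ≤ 2 * exp ((t * √R) ^ 2 / 8) - 1 + t * (√R / 2) :=
        hmgf.trans (by gcongr)
    _ ≤ (1 + t * √R) * exp ((t * √R) ^ 2 / 8) := by
        linarith [one_sub_mul_exp_sq_div_eight_le (mul_nonneg ht (sqrt_nonneg R))]

end ProbabilityTheory

theorem mgf_empirical_measure_simple_bound_general
    {E : Type*} [MeasurableSpace E] {Ω : Type*} [MeasurableSpace Ω]
    (μ : Measure Ω) [IsProbabilityMeasure μ]
    (N : ℕ)
    (X : Fin N → Ω → E) (μs : Fin N → Measure E)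
    (hmeas : ∀ k, Measurable (X k))
    (hindep : iIndepFun X μ)
    (hlaw : ∀ k, Measure.map (X k) μ = μs k)
    (h : Fin N → E → ℝ) (hmh : ∀ k, Measurable (h k))
    (hosc : ∀ k, BddAbove (Set.range fun q : E × E => |h k q.1 - h k q.2|))
    (hcentered : ∀ k, ∫ x, h k x ∂(μs k) = 0)
    (ε : ℝ) (hε : 0 ≤ ε) :
    (∫ ω, Real.exp (ε * Real.sqrt N * |(1 / (N : ℝ)) * ∑ k, h k (X k ω)|) ∂μ) ≤
      (1 + Real.sqrt (2 * Real.pi) * ε *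
          Real.sqrt ((1 / (N : ℝ)) * ∑ k, (osc (h k)) ^ 2)) *
        Real.exp (ε ^ 2 / 8 * ((1 / (N : ℝ)) * ∑ k, (osc (h k)) ^ 2)) := by
  set v := ∑ k, osc (h k) ^ 2
  have hmean : ∀ k, μ[fun ω => h k (X k ω)] = 0 := fun k => by
    rw [← integral_map (hmeas k).aemeasurable (hmh k).aestronglyMeasurable, hlaw k, hcentered k]
  have hbound := integral_exp_mul_abs_sum_le (fun k => ((hmh k).comp (hmeas k)).aemeasurable)
    (hindep.comp h hmh) (fun k => ae_of_all _ fun ω => mem_Icc_iInf_add_osc (hosc k) (X k ω))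
    hmean (div_nonneg hε (sqrt_nonneg N))
  have hscale : ε * √N * (1 / N) = ε / √N := by
    rw [mul_assoc, ← div_eq_mul_one_div, sqrt_div_self', mul_one_div]
  have hlhs : ∀ ω, ε * √N * |1 / N * ∑ k, h k (X k ω)| = ε / √N * |∑ k, h k (X k ω)| :=
    fun ω => by
    rw [abs_mul, abs_of_nonneg (by positivity : (0:ℝ) ≤ 1 / N), ← mul_assoc, hscale]
  have hσ : √(1 / N * v) = √v / √N := by
    rw [one_div, sqrt_mul (by positivity), sqrt_inv]; ring
  have hexp : (ε / √N) ^ 2 * v / 8 = ε ^ 2 / 8 * (1 / N * v) := by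
    rw [div_pow, sq_sqrt (Nat.cast_nonneg N)]; ring
  have hπ : 1 ≤ √(2 * π) := one_le_sqrt.2 (by nlinarith [pi_gt_three])
  simp_rw [hlhs]
  rw [← hexp, hσ]
  refine hbound.trans (mul_le_mul_of_nonneg_right ?_ (exp_pos _).le)
  calc 1 + ε / √N * √v = 1 + 1 * ε * (√v / √N) := by ring
    _ ≤ 1 + √(2 * π) * ε * (√v / √N) := by gcongr

/-- Corollary 1: simplified bound on the moment-generating function of the
centered empirical measure `m(X)(h) = (1/N) ∑ₖ hₖ(Xₖ)`, where
`σ(h) = √((1/N) ∑ₖ osc(hₖ)²)`. -/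
theorem mgf_empirical_measure_simple_bound
    {E : Type*} [MeasurableSpace E] {Ω : Type*} [MeasurableSpace Ω]
    (μ : Measure Ω) [IsProbabilityMeasure μ]
    (N : ℕ) (hN : 1 ≤ N)
    (X : Fin N → Ω → E) (μs : Fin N → Measure E)
    [∀ k, IsProbabilityMeasure (μs k)]
    (hmeas : ∀ k, Measurable (X k))
    (hindep : iIndepFun X μ)
    (hlaw : ∀ k, Measure.map (X k) μ = μs k)
    (h : Fin N → E → ℝ) (hmh : ∀ k, Measurable (h k))
    (hosc : ∀ k, BddAbove (Set.range fun q : E × E => |h k q.1 - h k q.2|))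
    (hcentered : ∀ k, ∫ x, h k x ∂(μs k) = 0)
    (ε : ℝ) (hε : 0 ≤ ε) :
    (∫ ω, Real.exp (ε * Real.sqrt N * |(1 / (N : ℝ)) * ∑ k, h k (X k ω)|) ∂μ) ≤
      (1 + Real.sqrt (2 * Real.pi) * ε *
          Real.sqrt ((1 / (N : ℝ)) * ∑ k, (osc (h k)) ^ 2)) *
        Real.exp (ε ^ 2 / 8 * ((1 / (N : ℝ)) * ∑ k, (osc (h k)) ^ 2)) :=
  mgf_empirical_measure_simple_bound_general μ N X μs hmeas hindep hlaw h hmh hosc hcentered ε hε
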